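/- For ζ in the annulus A = {e^{-π/2} < |ζ| < e^{π/2}}, the series ∑_{k>0} (kπ/2)/sinh(kπ/2) · ζ^k converges absolutely and equals π ζ ∑_{m≥0} e^{-(m+1/2)π} / (1 − e^{-(m+1/2)π} ζ)²; in particular it equals π e^{-π/2} ζ / (1 − e^{-π/2} ζ)² plus a function holomorphic in a neighborhood of the closed annulus. -/

import Mathlib

open Real Complex

noncomputable def annA : Set ℂ :=
  {ζ : ℂ | Real.exp (-(π / 2)) < ‖ζ‖ ∧ ‖ζ‖ < Real.exp (π / 2)}

noncomputable def qq (m : ℕ) : ℝ := Real.exp (-((m : ℝ) + 1 / 2) * π)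

lemma qq_pos (m : ℕ) : 0 < qq m := Real.exp_pos _

lemma qq_eq (m : ℕ) : qq m = Real.exp (-(π/2)) * Real.exp (-π) ^ m := by
  rw [qq, ← Real.exp_nat_mul, ← Real.exp_add]
  ring_nf

lemma qq_le (m : ℕ) : qq m ≤ Real.exp (-(π/2)) := by
  rw [qq, Real.exp_le_exp]
  nlinarith [pi_pos, Nat.cast_nonneg (α := ℝ) m]

lemma qq_zero : qq 0 = Real.exp (-(π/2)) := by
  rw [qq]; congr 1; push_cast; ring

lemma qq_succ_le (m : ℕ) : qq (m + 1) ≤ Real.exp (-(π/2) - π) := by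
  rw [qq, Real.exp_le_exp]
  push_cast
  nlinarith [pi_pos, Nat.cast_nonneg (α := ℝ) m]

lemma exp_neg_pi_lt_one : Real.exp (-π) < 1 :=
  Real.exp_lt_one_iff.mpr (by linarith [pi_pos])

lemma exp_neg_half_pi_lt_one : Real.exp (-(π/2)) < 1 :=
  Real.exp_lt_one_iff.mpr (by linarith [pi_pos])

lemma key_k (k : ℕ) :
    HasSum (fun m : ℕ => π * ((k : ℝ) + 1) * qq m ^ (k + 1))
      ((((k : ℝ) + 1) * π / 2) / Real.sinh (((k : ℝ) + 1) * π / 2)) := by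
  set t : ℝ := ((k : ℝ) + 1) * π / 2 with ht
  have ht0 : 0 < t := by have := pi_pos; positivity
  have hr1 : Real.exp (-(2 * t)) < 1 := by
    apply Real.exp_lt_one_iff.mpr; linarith
  have hgeo : HasSum (fun m : ℕ => Real.exp (-(2 * t)) ^ m) (1 - Real.exp (-(2 * t)))⁻¹ :=
    hasSum_geometric_of_lt_one (Real.exp_pos _).le hr1
  have h2 := hgeo.mul_left (π * ((k : ℝ) + 1) * Real.exp (-t))
  convert h2 using 1
  · rfl
  · funext m
    rw [qq, ← Real.exp_nat_mul, ← Real.exp_nat_mul]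
    have : Real.exp ((↑(k + 1) : ℝ) * (-((m : ℝ) + 1 / 2) * π))
        = Real.exp (-t) * Real.exp ((m : ℝ) * -(2 * t)) := by
      rw [← Real.exp_add, Real.exp_eq_exp]
      push_cast
      rw [ht]; ring
    rw [this]; ring
  · rw [Real.sinh_eq]
    have e1 : Real.exp (-t) * Real.exp t = 1 := by rw [← Real.exp_add]; simp
    have e2 : Real.exp (-(2 * t)) = Real.exp (-t) ^ 2 := by
      rw [sq, ← Real.exp_add]; ring_nf
    have hlt : Real.exp (-t) < Real.exp t := Real.exp_lt_exp.mpr (by linarith)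
    have hne : Real.exp t - Real.exp (-t) ≠ 0 := by linarith
    have hπk : π * ((k : ℝ) + 1) = 2 * t := by rw [ht]; ring
    have hden : 1 - Real.exp (-(2 * t)) ≠ 0 := by nlinarith [Real.exp_pos (-t), Real.exp_pos t]
    rw [hπk]
    rw [e2] at hden ⊢
    field_simp
    nlinarith [Real.exp_pos (-t), Real.exp_pos t]

/-- The holomorphic remainder function. -/
noncomputable def hfun : ℂ → ℂ := fun z =>
  (π : ℂ) * z * ∑' m : ℕ, ((qq (m + 1) : ℝ) : ℂ) / (1 - ((qq (m + 1) : ℝ) : ℂ) * z) ^ 2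

lemma one_sub_norm_le (w : ℂ) : 1 - ‖w‖ ≤ ‖1 - w‖ := by
  have := norm_sub_norm_le (1 : ℂ) w
  simpa using this

lemma hfun_diff : DifferentiableOn ℂ hfun (Metric.ball 0 (Real.exp π)) := by
  have hc : (0 : ℝ) < 1 - Real.exp (-(π/2)) := by linarith [exp_neg_half_pi_lt_one]
  have hsmall : ∀ (m : ℕ) (z : ℂ), z ∈ Metric.ball (0:ℂ) (Real.exp π) →
      ‖((qq (m + 1) : ℝ) : ℂ) * z‖ ≤ Real.exp (-(π/2)) := by
    intro m z hz
    rw [mem_ball_zero_iff] at hz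
    rw [norm_mul, Complex.norm_real, Real.norm_eq_abs, abs_of_pos (qq_pos _)]
    calc qq (m + 1) * ‖z‖ ≤ Real.exp (-(π/2) - π) * Real.exp π := by
          apply mul_le_mul (qq_succ_le m) hz.le (norm_nonneg z) (Real.exp_pos _).le
      _ = Real.exp (-(π/2)) := by rw [← Real.exp_add]; ring_nf
  have hden : ∀ (m : ℕ) (z : ℂ), z ∈ Metric.ball (0:ℂ) (Real.exp π) →
      1 - Real.exp (-(π/2)) ≤ ‖1 - ((qq (m + 1) : ℝ) : ℂ) * z‖ := by
    intro m z hz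
    calc 1 - Real.exp (-(π/2)) ≤ 1 - ‖((qq (m + 1) : ℝ) : ℂ) * z‖ := by
          linarith [hsmall m z hz]
      _ ≤ _ := one_sub_norm_le _
  have hne : ∀ (m : ℕ) (z : ℂ), z ∈ Metric.ball (0:ℂ) (Real.exp π) →
      (1 - ((qq (m + 1) : ℝ) : ℂ) * z) ^ 2 ≠ 0 := by
    intro m z hz
    apply pow_ne_zero
    intro h
    have := hden m z hz
    rw [h, norm_zero] at this
    linarith
  have hu : Summable (fun m : ℕ => qq (m + 1) / (1 - Real.exp (-(π/2))) ^ 2) := by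
    apply Summable.div_const
    have : Summable (fun m : ℕ => (Real.exp (-(π/2)) * Real.exp (-π)) * Real.exp (-π) ^ m) :=
      (summable_geometric_of_lt_one (Real.exp_pos _).le exp_neg_pi_lt_one).mul_left _
    apply this.congr
    intro m
    rw [qq_eq, pow_succ]
    ring
  have hdiff := differentiableOn_tsum_of_summable_norm (F := fun (m : ℕ) (z : ℂ) =>
      ((qq (m + 1) : ℝ) : ℂ) / (1 - ((qq (m + 1) : ℝ) : ℂ) * z) ^ 2)
      (U := Metric.ball 0 (Real.exp π)) hu ?_ Metric.isOpen_ball ?_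
  · exact (differentiableOn_const _ |>.mul differentiableOn_id).mul hdiff
  · intro m
    apply DifferentiableOn.div (differentiableOn_const _)
    · exact ((differentiableOn_const _).sub ((differentiableOn_const _).mul differentiableOn_id)).pow 2
    · exact hne m
  · intro m z hz
    rw [norm_div, norm_pow, Complex.norm_real, Real.norm_eq_abs, abs_of_pos (qq_pos _)]
    gcongr
    · exact (qq_pos _).le
    · exact hden m z hz


set_option maxHeartbeats 2000000 in
theorem stmt17 :
    ∃ h : ℂ → ℂ,
      (∃ V : Set ℂ, IsOpen V ∧ closure annA ⊆ V ∧ DifferentiableOn ℂ h V) ∧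
      ∀ ζ ∈ annA,
        (Summable fun k : ℕ =>
          ‖((((k : ℝ) + 1) * π / 2) / Real.sinh (((k : ℝ) + 1) * π / 2) : ℝ) * ζ ^ (k + 1)‖)
        ∧ HasSum (fun k : ℕ =>
            (((((k : ℝ) + 1) * π / 2) / Real.sinh (((k : ℝ) + 1) * π / 2) : ℝ) : ℂ) * ζ ^ (k + 1))
            ((π : ℂ) * ζ * ∑' m : ℕ,
              ((Real.exp (-((m : ℝ) + 1 / 2) * π) : ℝ) : ℂ)
                / (1 - ((Real.exp (-((m : ℝ) + 1 / 2) * π) : ℝ) : ℂ) * ζ) ^ 2)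
        ∧ (π : ℂ) * ζ * (∑' m : ℕ,
              ((Real.exp (-((m : ℝ) + 1 / 2) * π) : ℝ) : ℂ)
                / (1 - ((Real.exp (-((m : ℝ) + 1 / 2) * π) : ℝ) : ℂ) * ζ) ^ 2)
            = (π : ℂ) * ((Real.exp (-(π / 2)) : ℝ) : ℂ) * ζ
                / (1 - ((Real.exp (-(π / 2)) : ℝ) : ℂ) * ζ) ^ 2 + h ζ := by
  refine ⟨hfun, ⟨Metric.ball 0 (Real.exp π), Metric.isOpen_ball, ?_, hfun_diff⟩, ?_⟩
  · have h1 : annA ⊆ Metric.closedBall 0 (Real.exp (π/2)) := by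
      intro z hz
      rw [Metric.mem_closedBall, dist_zero_right]
      exact le_of_lt (by simpa using hz.2)
    refine (closure_minimal h1 Metric.isClosed_closedBall).trans (Metric.closedBall_subset_ball ?_)
    exact Real.exp_lt_exp.mpr (by linarith [pi_pos])
  intro ζ hζ
  obtain ⟨hζ1, hζ2⟩ := hζ
  simp only [show ∀ m : ℕ, Real.exp (-((m : ℝ) + 1 / 2) * π) = qq m from fun m => rfl]
  have hζnorm : ‖ζ‖ = ‖ζ‖ := rfl
  have hζ0 : ζ ≠ 0 := by
    intro h
    rw [h] at hζ1
    simp at hζ1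
    linarith [Real.exp_pos (-(π/2))]
  have hq0 : qq 0 * ‖ζ‖ < 1 := by
    rw [hζnorm, qq_zero]
    calc Real.exp (-(π/2)) * ‖ζ‖ < Real.exp (-(π/2)) * Real.exp (π/2) :=
          by apply mul_lt_mul_of_pos_left hζ2 (Real.exp_pos _)
      _ = 1 := by rw [← Real.exp_add]; simp
  have hq0' : 0 ≤ qq 0 * ‖ζ‖ := mul_nonneg (qq_pos 0).le (norm_nonneg _)
  have hxm : ∀ m : ℕ, ‖((qq m : ℝ) : ℂ) * ζ‖ < 1 := by
    intro m
    rw [norm_mul, Complex.norm_real, Real.norm_eq_abs, abs_of_pos (qq_pos _)]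
    calc qq m * ‖ζ‖ ≤ qq 0 * ‖ζ‖ := by
          apply mul_le_mul_of_nonneg_right _ (norm_nonneg _)
          rw [qq_zero]; exact qq_le m
      _ < 1 := hq0
  -- the double sum
  set F : ℕ × ℕ → ℂ := fun p =>
    ((π * ((p.1 : ℝ) + 1) * qq p.2 ^ (p.1 + 1) : ℝ) : ℂ) * ζ ^ (p.1 + 1) with hF
  -- summability of norms of F
  have hFnorm : ∀ p : ℕ × ℕ, ‖F p‖ = π * ((p.1 : ℝ) + 1) * (qq p.2 * ‖ζ‖) ^ (p.1 + 1) := by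
    intro p
    rw [hF]
    have h1 : (0:ℝ) ≤ π * ((p.1 : ℝ) + 1) * qq p.2 ^ (p.1 + 1) := by
      have := pi_pos; have := qq_pos p.2; positivity
    rw [norm_mul, Complex.norm_real, Real.norm_eq_abs, _root_.abs_of_nonneg h1, norm_pow, mul_pow]
    ring
  have hbound : ∀ p : ℕ × ℕ, ‖F p‖ ≤
      (π * ((p.1 : ℝ) + 1) * (qq 0 * ‖ζ‖) ^ (p.1 + 1)) * Real.exp (-π) ^ p.2 := by
    intro p
    rw [hFnorm p]
    have he : qq p.2 * ‖ζ‖ = (qq 0 * ‖ζ‖) * Real.exp (-π) ^ p.2 := by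
      rw [qq_eq, qq_zero]; ring
    rw [he, mul_pow]
    have hp1 : (Real.exp (-π) ^ p.2) ^ (p.1 + 1) ≤ Real.exp (-π) ^ p.2 := by
      rw [← pow_mul]
      apply pow_le_pow_of_le_one (Real.exp_pos _).le exp_neg_pi_lt_one.le
      exact Nat.le_mul_of_pos_right _ (Nat.succ_pos _)
    have hnn : (0:ℝ) ≤ π * ((p.1 : ℝ) + 1) * (qq 0 * ‖ζ‖) ^ (p.1 + 1) := by
      have := pi_pos; positivity
    calc π * ((p.1:ℝ) + 1) * ((qq 0 * ‖ζ‖) ^ (p.1+1) * (Real.exp (-π) ^ p.2) ^ (p.1+1))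
        = (π * ((p.1:ℝ) + 1) * (qq 0 * ‖ζ‖) ^ (p.1+1)) * (Real.exp (-π) ^ p.2) ^ (p.1+1) := by ring
      _ ≤ _ := mul_le_mul_of_nonneg_left hp1 hnn
  have hfk : Summable (fun k : ℕ => π * ((k : ℝ) + 1) * (qq 0 * ‖ζ‖) ^ (k + 1)) := by
    have h0 : ‖qq 0 * ‖ζ‖‖ < 1 := by rwa [Real.norm_eq_abs, _root_.abs_of_nonneg hq0']
    have := (hasSum_coe_mul_geometric_of_norm_lt_one (𝕜 := ℝ) h0).summable
    have h2 := ((summable_nat_add_iff 1).2 this).mul_left π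
    apply h2.congr
    intro k
    push_cast
    ring
  have hGsum : Summable (fun p : ℕ × ℕ =>
      (π * ((p.1 : ℝ) + 1) * (qq 0 * ‖ζ‖) ^ (p.1 + 1)) * Real.exp (-π) ^ p.2) := by
    apply Summable.mul_of_nonneg hfk
      (summable_geometric_of_lt_one (Real.exp_pos _).le exp_neg_pi_lt_one)
    · intro k
      have := pi_pos; positivity
    · intro m
      positivity
  have hFnormsum : Summable (fun p : ℕ × ℕ => ‖F p‖) :=
    Summable.of_nonneg_of_le (fun _ => norm_nonneg _) hbound hGsum
  have hFsum : Summable F := hFnormsum.of_norm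
  -- fiberwise over m (for fixed k)
  have hasSum_k : ∀ k : ℕ, HasSum (fun m => F (k, m))
      ((((((k : ℝ) + 1) * π / 2) / Real.sinh (((k : ℝ) + 1) * π / 2) : ℝ) : ℂ) * ζ ^ (k + 1)) := by
    intro k
    exact (Complex.hasSum_ofReal.mpr (key_k k)).mul_right _
  -- the outer sum over k
  have hout : HasSum (fun k : ℕ =>
      (((((k : ℝ) + 1) * π / 2) / Real.sinh (((k : ℝ) + 1) * π / 2) : ℝ) : ℂ) * ζ ^ (k + 1))
      (∑' p, F p) :=
    hFsum.hasSum.prod_fiberwise hasSum_k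
  -- fiberwise over k (for fixed m)
  have hasSum_m : ∀ m : ℕ, HasSum (fun k => F (k, m))
      ((π : ℂ) * (((qq m : ℝ) : ℂ) * ζ) / (1 - ((qq m : ℝ) : ℂ) * ζ) ^ 2) := by
    intro m
    set x : ℂ := ((qq m : ℝ) : ℂ) * ζ with hx
    have A := hasSum_coe_mul_geometric_of_norm_lt_one (hxm m)
    have B := (hasSum_nat_add_iff' (f := fun n : ℕ => (n : ℂ) * x ^ n) 1).2 A
    simp only [Finset.range_one, Finset.sum_singleton, Nat.cast_zero, zero_mul, sub_zero] at B
    have C := B.mul_left (π : ℂ)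
    rw [mul_div_assoc]
    have hfe : (fun i : ℕ => (π : ℂ) * ((↑(i + 1) : ℂ) * x ^ (i + 1))) = fun i => F (i, m) := by
      funext i
      rw [hF, hx]
      push_cast
      ring
    rw [hfe] at C
    exact C
  have hM : HasSum (fun m : ℕ =>
      (π : ℂ) * (((qq m : ℝ) : ℂ) * ζ) / (1 - ((qq m : ℝ) : ℂ) * ζ) ^ 2) (∑' p, F p) := by
    have hswap : HasSum (F ∘ ⇑(Equiv.prodComm ℕ ℕ)) (∑' p, F p) :=
      ((Equiv.prodComm ℕ ℕ).hasSum_iff).2 hFsum.hasSum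
    exact hswap.prod_fiberwise (fun m => hasSum_m m)
  -- rewrite total sum
  have hval : (π : ℂ) * ζ * (∑' m : ℕ, ((qq m : ℝ) : ℂ) / (1 - ((qq m : ℝ) : ℂ) * ζ) ^ 2)
      = ∑' p, F p := by
    rw [← hM.tsum_eq, ← tsum_mul_left]
    exact tsum_congr fun m => by ring
  refine ⟨?_, ?_, ?_⟩
  · -- summability of norms
    have hfib : ∀ k : ℕ, Summable fun m => ‖F (k, m)‖ := fun k => hFnormsum.prod_factor k
    have houter : Summable fun k : ℕ => ∑' m, ‖F (k, m)‖ := hFnormsum.prod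
    apply Summable.of_nonneg_of_le (fun _ => norm_nonneg _) _ houter
    intro k
    calc ‖((((((k : ℝ) + 1) * π / 2) / Real.sinh (((k : ℝ) + 1) * π / 2) : ℝ)) : ℂ) * ζ ^ (k + 1)‖
        = ‖∑' m, F (k, m)‖ := by rw [(hasSum_k k).tsum_eq]
      _ ≤ ∑' m, ‖F (k, m)‖ := norm_tsum_le_tsum_norm (hfib k)
  · rw [hval]
    exact hout
  · -- splitting off the m = 0 term
    have hπ0 : (π : ℂ) ≠ 0 := Complex.ofReal_ne_zero.mpr pi_ne_zero
    have hgsum : Summable (fun m : ℕ => ((qq m : ℝ) : ℂ) / (1 - ((qq m : ℝ) : ℂ) * ζ) ^ 2) := by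
      have := hM.summable.mul_left (1 / ((π : ℂ) * ζ))
      apply this.congr
      intro m
      have hrw : (π : ℂ) * (((qq m : ℝ) : ℂ) * ζ) / (1 - ((qq m : ℝ) : ℂ) * ζ) ^ 2
          = ((π : ℂ) * ζ) * (((qq m : ℝ) : ℂ) / (1 - ((qq m : ℝ) : ℂ) * ζ) ^ 2) := by ring
      rw [hrw, one_div, inv_mul_cancel_left₀ (mul_ne_zero hπ0 hζ0)]
    rw [hgsum.tsum_eq_zero_add, hfun]
    rw [qq_zero]
    ring
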